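/- arXiv:1803.10759 — 2 statements merged into one kernel-verified Lean document; each statement's English description precedes it below -/
import Mathlib

section
/- Let C be a unital C*-algebra and S ⊆ C an operator subsystem containing enough unitaries (the unitaries of C lying in S generate C as a C*-algebra). Then S is hyperrigid in C: every unital *-representation π : C → B(H) has the property that its restriction to S has no nontrivial dilations, i.e. any ucp dilation ψ : C → B(K) of π|_S with K ⊇ H decomposes as π ⊕ χ for some ucp map χ. -/
open Matrix ContinuousLinearMap
open scoped InnerProductSpace ComplexConjugate

def MatPos {R : Type*} [Ring R] [StarRing R] {ι : Type*} [Fintype ι]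
    (M : Matrix ι ι R) : Prop :=
  ∃ B : Matrix ι ι R, M = star B * B

def IsCPMap {A B : Type*} [Ring A] [StarRing A] [Module ℂ A]
    [Ring B] [StarRing B] [Module ℂ B] (φ : A →ₗ[ℂ] B) : Prop :=
  ∀ n : ℕ, ∀ M : Matrix (Fin n) (Fin n) A, MatPos M → MatPos (M.map ⇑φ)

section Aux

variable {A : Type*} [Ring A] [StarRing A] [Module ℂ A]
variable {K : Type*} [NormedAddCommGroup K] [InnerProductSpace ℂ K] [CompleteSpace K]

private lemma schwarz_aux (ψ : A →ₗ[ℂ] (K →L[ℂ] K)) (hψcp : IsCPMap ψ) (a c : A) (ζ ω : K) :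
    0 ≤ (⟪ζ, ψ (star a * a) ζ⟫_ℂ + ⟪ζ, ψ (star a * c) ω⟫_ℂ
      + ⟪ω, ψ (star c * a) ζ⟫_ℂ + ⟪ω, ψ (star c * c) ω⟫_ℂ).re := by
  obtain ⟨D, hD⟩ := hψcp 2 (Matrix.of ![![star a * a, star a * c], ![star c * a, star c * c]])
    ⟨Matrix.of ![![a, c], ![0, 0]], by
      ext i j
      fin_cases i <;> fin_cases j <;>
        simp [Matrix.mul_apply, Fin.sum_univ_two, Matrix.star_eq_conjTranspose,
          Matrix.conjTranspose_apply]⟩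
  have he : ∀ i j : Fin 2,
      ψ (Matrix.of ![![star a * a, star a * c], ![star c * a, star c * c]] i j)
      = ContinuousLinearMap.adjoint (D 0 i) ∘L D 0 j
        + ContinuousLinearMap.adjoint (D 1 i) ∘L D 1 j := by
    intro i j
    have h := congrFun (congrFun hD i) j
    simpa [Matrix.map_apply, Matrix.mul_apply, Fin.sum_univ_two,
      Matrix.star_eq_conjTranspose, Matrix.conjTranspose_apply,
      ContinuousLinearMap.star_eq_adjoint, ContinuousLinearMap.mul_def] using h
  have h00 := he 0 0
  have h01 := he 0 1
  have h10 := he 1 0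
  have h11 := he 1 1
  simp only [Matrix.of_apply, Matrix.cons_val', Matrix.cons_val_zero, Matrix.cons_val_one,
    Matrix.head_cons, Matrix.empty_val', Matrix.cons_val_fin_one, Matrix.head_fin_const] at h00 h01 h10 h11
  have key : (⟪ζ, ψ (star a * a) ζ⟫_ℂ + ⟪ζ, ψ (star a * c) ω⟫_ℂ
      + ⟪ω, ψ (star c * a) ζ⟫_ℂ + ⟪ω, ψ (star c * c) ω⟫_ℂ)
      = ⟪D 0 0 ζ + D 0 1 ω, D 0 0 ζ + D 0 1 ω⟫_ℂ
        + ⟪D 1 0 ζ + D 1 1 ω, D 1 0 ζ + D 1 1 ω⟫_ℂ := by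
    rw [h00, h01, h10, h11]
    simp only [ContinuousLinearMap.add_apply, ContinuousLinearMap.comp_apply,
      inner_add_right, inner_add_left, ContinuousLinearMap.adjoint_inner_right, inner_add_add_self]
    ring
  rw [key]
  simp only [Complex.add_re]
  have n1 := inner_self_nonneg (𝕜 := ℂ) (x := D 0 0 ζ + D 0 1 ω)
  have n2 := inner_self_nonneg (𝕜 := ℂ) (x := D 1 0 ζ + D 1 1 ω)
  exact add_nonneg n1 n2

private lemma herm_aux (ψ : A →ₗ[ℂ] (K →L[ℂ] K)) (hψcp : IsCPMap ψ) (c : A) :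
    ψ (star c) = star (ψ c) := by
  obtain ⟨D, hD⟩ := hψcp 2 (Matrix.of ![![(1 : A), c], ![star c, star c * c]])
    ⟨Matrix.of ![![1, c], ![0, 0]], by
      ext i j
      fin_cases i <;> fin_cases j <;>
        simp [Matrix.mul_apply, Fin.sum_univ_two, Matrix.star_eq_conjTranspose,
          Matrix.conjTranspose_apply]⟩
  have hsa : star ((Matrix.of ![![(1 : A), c], ![star c, star c * c]]).map ⇑ψ)
      = (Matrix.of ![![(1 : A), c], ![star c, star c * c]]).map ⇑ψ := by
    rw [hD, Matrix.star_mul, star_star]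
  have h := congrFun (congrFun hsa 0) 1
  simp only [Matrix.star_eq_conjTranspose, Matrix.conjTranspose_apply, Matrix.map_apply,
    Matrix.of_apply, Matrix.cons_val', Matrix.cons_val_zero, Matrix.cons_val_one,
    Matrix.head_cons, Matrix.empty_val', Matrix.cons_val_fin_one, Matrix.vecHead, Matrix.vecTail] at h
  rw [← h, star_star]

end Aux
section Aux2

variable {K : Type*} [NormedAddCommGroup K] [InnerProductSpace ℂ K] [CompleteSpace K]

private lemma cre (x : K) : (⟪x, x⟫_ℂ).re = ‖x‖ ^ 2 := by
  rw [← inner_self_eq_norm_sq (𝕜 := ℂ)]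
  rfl

private lemma sa_opnorm_le (T : K →L[ℂ] K) (hT : IsSelfAdjoint T) {M : ℝ} (hM : 0 ≤ M)
    (h : ∀ ξ : K, |(⟪ξ, T ξ⟫_ℂ).re| ≤ M * ‖ξ‖ ^ 2) : ‖T‖ ≤ M := by
  refine ContinuousLinearMap.opNorm_le_bound T hM fun ξ => ?_
  rcases eq_or_ne (T ξ) 0 with hTξ | hTξ
  · rw [hTξ]
    simpa using mul_nonneg hM (norm_nonneg ξ)
  have hξ : ξ ≠ 0 := fun h0 => hTξ (by simp [h0])
  have hξpos : 0 < ‖ξ‖ := norm_pos_iff.mpr hξ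
  have hTξpos : 0 < ‖T ξ‖ := norm_pos_iff.mpr hTξ
  set η := (((‖ξ‖ / ‖T ξ‖ : ℝ) : ℂ)) • T ξ with hη_def
  have hη : ‖η‖ = ‖ξ‖ := by
    rw [hη_def, norm_smul]
    simp [abs_div, abs_of_nonneg (norm_nonneg ξ), abs_of_pos hTξpos]
    field_simp
  have hTadj : ContinuousLinearMap.adjoint T = T := hT
  have hsym : ∀ x y : K, (⟪x, T y⟫_ℂ).re = (⟪y, T x⟫_ℂ).re := by
    intro x y
    rw [← ContinuousLinearMap.adjoint_inner_left, hTadj, ← inner_conj_symm]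
    exact (Complex.conj_re _)
  have key : (⟪ξ + η, T (ξ + η)⟫_ℂ).re - (⟪ξ - η, T (ξ - η)⟫_ℂ).re
      = 4 * (⟪η, T ξ⟫_ℂ).re := by
    have e1 : ⟪ξ + η, T (ξ + η)⟫_ℂ = ⟪ξ, T ξ⟫_ℂ + ⟪ξ, T η⟫_ℂ + ⟪η, T ξ⟫_ℂ + ⟪η, T η⟫_ℂ := by
      rw [map_add]
      simp [inner_add_left, inner_add_right]
      ring
    have e2 : ⟪ξ - η, T (ξ - η)⟫_ℂ = ⟪ξ, T ξ⟫_ℂ - ⟪ξ, T η⟫_ℂ - ⟪η, T ξ⟫_ℂ + ⟪η, T η⟫_ℂ := by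
      rw [map_sub]
      simp [inner_sub_left, inner_sub_right]
      ring
    rw [e1, e2]
    simp only [Complex.add_re, Complex.sub_re]
    have := hsym ξ η
    linarith
  have hre : (⟪η, T ξ⟫_ℂ).re = ‖ξ‖ * ‖T ξ‖ := by
    rw [hη_def, inner_smul_left]
    rw [Complex.conj_ofReal]
    have : (⟪T ξ, T ξ⟫_ℂ).re = ‖T ξ‖ ^ 2 := cre _
    rw [Complex.re_ofReal_mul, this]
    field_simp
  have hpar := parallelogram_law_with_norm ℂ ξ η
  have b1 := (abs_le.mp (h (ξ + η))).2
  have b2 := (abs_le.mp (h (ξ - η))).1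
  have hpar2 : ‖ξ + η‖ ^ 2 + ‖ξ - η‖ ^ 2 = 2 * (‖ξ‖ ^ 2 + ‖ξ‖ ^ 2) := by
    rw [hη] at hpar
    simp only [pow_two]
    linarith
  have hb : 4 * (‖ξ‖ * ‖T ξ‖) ≤ 4 * (M * ‖ξ‖ ^ 2) := by
    rw [← hre, ← key]
    nlinarith [hpar2, b1, b2]
  have : ‖ξ‖ * ‖T ξ‖ ≤ M * ‖ξ‖ ^ 2 := by linarith
  calc ‖T ξ‖ = (‖ξ‖ * ‖T ξ‖) / ‖ξ‖ := by field_simp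
    _ ≤ (M * ‖ξ‖ ^ 2) / ‖ξ‖ := by gcongr
    _ = M * ‖ξ‖ := by field_simp

end Aux2

private lemma cstar_exists_sqrt {A : Type*} [CStarAlgebra A] (a : A) (ha : IsSelfAdjoint a) :
    ∃ b : A, (‖a‖ : ℂ) • (1 : A) - a = star b * b := by
  rcases subsingleton_or_nontrivial A with h | h
  · exact ⟨0, Subsingleton.elim _ _⟩
  refine ⟨cfc (fun x : ℝ => Real.sqrt (‖a‖ - x)) a, ?_⟩
  have hb : IsSelfAdjoint (cfc (fun x : ℝ => Real.sqrt (‖a‖ - x)) a) := cfc_predicate _ a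
  rw [hb.star_eq, ← cfc_mul _ _ a (by fun_prop) (by fun_prop)]
  symm
  have hspec : ∀ x ∈ spectrum ℝ a, 0 ≤ ‖a‖ - x := by
    intro x hx
    have h1 : ‖x‖ ≤ ‖a‖ := spectrum.norm_le_norm_of_mem hx
    have h2 : |x| ≤ ‖a‖ := by simpa [Real.norm_eq_abs] using h1
    linarith [(abs_le.mp h2).2]
  calc cfc (fun x : ℝ => Real.sqrt (‖a‖ - x) * Real.sqrt (‖a‖ - x)) a
      = cfc (fun x : ℝ => ‖a‖ - x) a :=
        cfc_congr fun x hx => Real.mul_self_sqrt (hspec x hx)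
    _ = algebraMap ℝ A ‖a‖ - a := by
        rw [cfc_sub (fun _ : ℝ => ‖a‖) (fun x : ℝ => x) a, cfc_const _ a, cfc_id' ℝ a]
    _ = (‖a‖ : ℂ) • (1 : A) - a := by
        congr 1
        rw [Algebra.algebraMap_eq_smul_one]
        norm_num [← Complex.coe_smul]
set_option maxHeartbeats 2000000 in
/-- **Operator systems containing enough unitaries are hyperrigid.**
Let `C` be a unital C*-algebra, `S ⊆ C` an operator subsystem such that the unitaries of
`C` lying in `S` generate `C` as a C*-algebra.  Then for every unital *-representation
`π : C → B(H)` and every ucp dilation `ψ : C → B(K)` of `π|_S` along an isometry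
`V : H → K`, the dilation is trivial: `ψ` decomposes as `π ⊕ χ`, i.e. the compression of
`ψ` equals `π` on all of `C` and `ψ(c)` commutes with the projection `V V*`. -/
theorem enough_unitaries_hyperrigid
    {C : Type*} [NormedRing C] [StarRing C] [CStarRing C] [NormedAlgebra ℂ C]
    [StarModule ℂ C] [CompleteSpace C]
    (S : Submodule ℂ C) (h1 : (1 : C) ∈ S) (hstar : ∀ x ∈ S, star x ∈ S)
    (hgen : closure ((StarAlgebra.adjoin ℂ
        {u : C | u ∈ S ∧ u ∈ unitary C} : StarSubalgebra ℂ C) : Set C) = Set.univ)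
    {H K : Type*} [NormedAddCommGroup H] [InnerProductSpace ℂ H] [CompleteSpace H]
    [NormedAddCommGroup K] [InnerProductSpace ℂ K] [CompleteSpace K]
    (π : C →⋆ₐ[ℂ] (H →L[ℂ] H))
    (ψ : C →ₗ[ℂ] (K →L[ℂ] K)) (hψ1 : ψ 1 = 1) (hψcp : IsCPMap ψ)
    (V : H →L[ℂ] K) (hV : (ContinuousLinearMap.adjoint V) ∘L V = 1)
    (hdil : ∀ x ∈ S, (ContinuousLinearMap.adjoint V) ∘L (ψ x) ∘L V = π x) :
    ∀ c : C,
      (ContinuousLinearMap.adjoint V) ∘L (ψ c) ∘L V = π c ∧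
      (ψ c) ∘L (V ∘L (ContinuousLinearMap.adjoint V))
        = (V ∘L (ContinuousLinearMap.adjoint V)) ∘L (ψ c) := by
  classical
  letI : CStarAlgebra C := ⟨⟩
  -- ψ is star preserving
  have hψstar : ∀ c : C, ψ (star c) = star (ψ c) := herm_aux ψ hψcp
  -- V is an isometry
  have hVapp : ∀ w : K, ∀ ξ : H, ⟪V ξ, w⟫_ℂ = ⟪ξ, (ContinuousLinearMap.adjoint V) w⟫_ℂ := by
    intro w ξ
    rw [ContinuousLinearMap.adjoint_inner_right]
  have hVdV : ∀ ξ : H, (ContinuousLinearMap.adjoint V) (V ξ) = ξ := fun ξ => by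
    have := ContinuousLinearMap.ext_iff.mp hV ξ
    simpa using this
  have hVisom : ∀ ξ η : H, ⟪V ξ, V η⟫_ℂ = ⟪ξ, η⟫_ℂ := by
    intro ξ η
    rw [hVapp, hVdV]
  -- the compression θ
  set θ : C → (H →L[ℂ] H) := fun c => (ContinuousLinearMap.adjoint V) ∘L (ψ c) ∘L V with hθ_def
  have hθinner : ∀ (c : C) (ξ η : H), ⟪ξ, θ c η⟫_ℂ = ⟪V ξ, ψ c (V η)⟫_ℂ := by
    intro c ξ η
    rw [hVapp]
    rfl
  have hθ1 : θ 1 = 1 := by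
    rw [hθ_def]
    simp only [hψ1, ContinuousLinearMap.one_def, ContinuousLinearMap.id_comp]
    exact hV
  have hθadd : ∀ x y : C, θ (x + y) = θ x + θ y := by
    intro x y
    simp only [hθ_def, map_add, ContinuousLinearMap.add_comp, ContinuousLinearMap.comp_add]
  have hθsmul : ∀ (z : ℂ) (x : C), θ (z • x) = z • θ x := by
    intro z x
    simp only [hθ_def, _root_.map_smul, ContinuousLinearMap.smul_comp, ContinuousLinearMap.comp_smul]
  have hθstar : ∀ c : C, θ (star c) = star (θ c) := by
    intro c
    simp only [hθ_def, hψstar, ContinuousLinearMap.star_eq_adjoint,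
      ← ContinuousLinearMap.comp_assoc, ContinuousLinearMap.adjoint_comp,
      ContinuousLinearMap.adjoint_adjoint]
  have hθS : ∀ x ∈ S, θ x = π x := hdil
  -- Schwarz positivity for θ
  have hθschwarz : ∀ (a c : C) (ξ η : H),
      0 ≤ (⟪ξ, θ (star a * a) ξ⟫_ℂ + ⟪ξ, θ (star a * c) η⟫_ℂ
        + ⟪η, θ (star c * a) ξ⟫_ℂ + ⟪η, θ (star c * c) η⟫_ℂ).re := by
    intro a c ξ η
    simp only [hθinner]
    exact schwarz_aux ψ hψcp a c (V ξ) (V η)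
  -- Schwarz gap inequality for θ
  have hSG : ∀ (x : C) (ξ : H), ‖θ x ξ‖ ^ 2 ≤ (⟪ξ, θ (star x * x) ξ⟫_ℂ).re := by
    intro x ξ
    have h := hθschwarz x 1 ξ (-(θ x ξ))
    have e1 : θ (star x * 1) = star (θ x) := by rw [mul_one, hθstar]
    have e2 : θ (star 1 * x) = θ x := by rw [star_one, one_mul]
    have e3 : θ (star (1 : C) * 1) = 1 := by rw [star_one, one_mul, hθ1]
    rw [e1, e2, e3] at h
    have r1 : ⟪ξ, (star (θ x)) (-(θ x ξ))⟫_ℂ = -⟪θ x ξ, θ x ξ⟫_ℂ := by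
      rw [ContinuousLinearMap.star_eq_adjoint, ContinuousLinearMap.adjoint_inner_right]
      simp [inner_neg_right]
    have r2 : ⟪-(θ x ξ), θ x ξ⟫_ℂ = -⟪θ x ξ, θ x ξ⟫_ℂ := by simp
    have r3 : ⟪-(θ x ξ), (1 : H →L[ℂ] H) (-(θ x ξ))⟫_ℂ = ⟪θ x ξ, θ x ξ⟫_ℂ := by simp
    rw [r1, r2, r3] at h
    have := cre (θ x ξ)
    simp only [Complex.add_re, Complex.neg_re] at h
    linarith
  -- gap inequality for ψ as well
  have hSGψ : ∀ (x : C) (ζ : K), ‖ψ x ζ‖ ^ 2 ≤ (⟪ζ, ψ (star x * x) ζ⟫_ℂ).re := by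
    intro x ζ
    have h := schwarz_aux ψ hψcp x 1 ζ (-(ψ x ζ))
    have e1 : ψ (star x * 1) = star (ψ x) := by rw [mul_one, hψstar]
    have e2 : ψ (star 1 * x) = ψ x := by rw [star_one, one_mul]
    have e3 : ψ (star (1 : C) * 1) = 1 := by rw [star_one, one_mul, hψ1]
    rw [e1, e2, e3] at h
    have r1 : ⟪ζ, (star (ψ x)) (-(ψ x ζ))⟫_ℂ = -⟪ψ x ζ, ψ x ζ⟫_ℂ := by
      rw [ContinuousLinearMap.star_eq_adjoint, ContinuousLinearMap.adjoint_inner_right]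
      simp [inner_neg_right]
    have r2 : ⟪-(ψ x ζ), ψ x ζ⟫_ℂ = -⟪ψ x ζ, ψ x ζ⟫_ℂ := by simp
    have r3 : ⟪-(ψ x ζ), (1 : K →L[ℂ] K) (-(ψ x ζ))⟫_ℂ = ⟪ψ x ζ, ψ x ζ⟫_ℂ := by simp
    rw [r1, r2, r3] at h
    have := cre (ψ x ζ)
    simp only [Complex.add_re, Complex.neg_re] at h
    linarith
  -- adjoint of π
  have hπadj : ∀ c : C, ContinuousLinearMap.adjoint (π c) = π (star c) := by
    intro c
    rw [← ContinuousLinearMap.star_eq_adjoint, ← map_star]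
  -- π of a unitary is isometric on inner products
  have hπu : ∀ u : C, u ∈ unitary C → ∀ ξ : H, ‖π u ξ‖ ^ 2 = ‖ξ‖ ^ 2 := by
    intro u hu ξ
    rw [← cre, ← cre ξ]
    congr 1
    calc ⟪π u ξ, π u ξ⟫_ℂ = ⟪ξ, (ContinuousLinearMap.adjoint (π u)) (π u ξ)⟫_ℂ := by
          rw [ContinuousLinearMap.adjoint_inner_right]
      _ = ⟪ξ, ξ⟫_ℂ := by
          rw [hπadj]
          have : π (star u) (π u ξ) = ξ := by
            rw [← ContinuousLinearMap.comp_apply, ← ContinuousLinearMap.mul_def,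
              ← _root_.map_mul, (Unitary.mem_iff.mp hu).1, _root_.map_one]
            rfl
          rw [this]
    -- multiplicative domain: left multiplication by star u for unitary u ∈ S
  have hML : ∀ u : C, u ∈ S → u ∈ unitary C →
      ∀ c : C, θ (star u * c) = (π (star u)) ∘L θ c := by
    intro u huS huU
    have hθu : θ u = π u := hθS u huS
    have hu1 : star u * u = (1 : C) := (Unitary.mem_iff.mp huU).1
    have main : ∀ (c' : C) (ξ : H),
        (⟪ξ, (θ (star u * c') - (π (star u)) ∘L θ c') ξ⟫_ℂ).re = 0 := by
      intro c' ξ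
      set Aq : ℝ := (⟪ξ, θ (star u * c') ξ⟫_ℂ).re + (⟪ξ, θ (star c' * u) ξ⟫_ℂ).re
        - 2 * (⟪π u ξ, θ c' ξ⟫_ℂ).re with hAq
      set Bq : ℝ := (⟪ξ, θ (star c' * c') ξ⟫_ℂ).re - ‖θ c' ξ‖ ^ 2 with hBq
      have hBnn : 0 ≤ Bq := by
        have := hSG c' ξ
        rw [hBq]
        linarith
      have hsym2 : (⟪θ c' ξ, π u ξ⟫_ℂ).re = (⟪π u ξ, θ c' ξ⟫_ℂ).re := by
        rw [← inner_conj_symm]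
        exact Complex.conj_re _
      have hquad : ∀ t : ℝ, 0 ≤ t * Aq + t ^ 2 * Bq := by
        intro t
        have h := hSG (u + (t : ℂ) • c') ξ
        have expand : star (u + (t : ℂ) • c') * (u + (t : ℂ) • c')
            = 1 + (t : ℂ) • (star u * c' + star c' * u)
              + ((t : ℂ) * (t : ℂ)) • (star c' * c') := by
          have hstaru : star (u + (t : ℂ) • c') = star u + (t : ℂ) • star c' := by
            rw [star_add, star_smul]
            norm_num [Complex.star_def, Complex.conj_ofReal]
          rw [hstaru]
          simp only [mul_add, add_mul, smul_mul_assoc, mul_smul_comm, smul_smul, hu1]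
          module
        have hθexpand : θ (star (u + (t : ℂ) • c') * (u + (t : ℂ) • c'))
            = 1 + (t : ℂ) • (θ (star u * c') + θ (star c' * u))
              + ((t : ℂ) * (t : ℂ)) • θ (star c' * c') := by
          rw [expand]
          simp only [hθadd, hθsmul, hθ1]
        have hθL : θ (u + (t : ℂ) • c') = π u + (t : ℂ) • θ c' := by
          rw [hθadd, hθsmul, hθu]
        rw [hθexpand, hθL] at h
        have hrhs : (⟪ξ, ((1 : H →L[ℂ] H) + (t : ℂ) • (θ (star u * c') + θ (star c' * u))
              + ((t : ℂ) * (t : ℂ)) • θ (star c' * c')) ξ⟫_ℂ).re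
            = ‖ξ‖ ^ 2 + t * ((⟪ξ, θ (star u * c') ξ⟫_ℂ).re + (⟪ξ, θ (star c' * u) ξ⟫_ℂ).re)
              + t ^ 2 * (⟪ξ, θ (star c' * c') ξ⟫_ℂ).re := by
          simp only [ContinuousLinearMap.add_apply, ContinuousLinearMap.smul_apply,
            ContinuousLinearMap.one_apply, inner_add_right, inner_smul_right, Complex.add_re,
            smul_eq_mul, mul_assoc]
          rw [cre ξ]
          simp only [Complex.re_ofReal_mul, Complex.add_re]
          ring
        have hlhs : ‖(π u + (t : ℂ) • θ c') ξ‖ ^ 2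
            = ‖ξ‖ ^ 2 + 2 * t * (⟪π u ξ, θ c' ξ⟫_ℂ).re + t ^ 2 * ‖θ c' ξ‖ ^ 2 := by
          rw [← cre]
          simp only [ContinuousLinearMap.add_apply, ContinuousLinearMap.smul_apply]
          rw [inner_add_add_self]
          simp only [inner_smul_left, inner_smul_right, Complex.conj_ofReal, Complex.add_re,
            Complex.re_ofReal_mul]
          rw [cre (θ c' ξ)]
          have := hπu u huU ξ
          rw [← cre (π u ξ)] at this
          rw [this, hsym2]
          ring
        rw [hrhs, hlhs] at h
        rw [hAq, hBq]
        nlinarith [h]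
      have hA0 : Aq = 0 := by
        have h1 := hquad (-(Aq / (Bq + 1)))
        have hBpos : 0 < Bq + 1 := by linarith
        have heq : -(Aq / (Bq + 1)) * Aq + (-(Aq / (Bq + 1))) ^ 2 * Bq
            = -(Aq ^ 2) / (Bq + 1) ^ 2 := by
          field_simp
          ring
        rw [heq] at h1
        have h5 : (0 : ℝ) ≤ -(Aq ^ 2) := by
          have h6 : (0:ℝ) < (Bq + 1) ^ 2 := by positivity
          have h7 := mul_nonneg h1 (le_of_lt h6)
          calc (0:ℝ) ≤ -(Aq ^ 2) / (Bq + 1) ^ 2 * (Bq + 1) ^ 2 := h7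
            _ = -(Aq ^ 2) := by field_simp
        have h8 : Aq ^ 2 = 0 := le_antisymm (by linarith) (sq_nonneg Aq)
        exact sq_eq_zero_iff.mp h8
      have e1 : (⟪ξ, θ (star c' * u) ξ⟫_ℂ).re = (⟪ξ, θ (star u * c') ξ⟫_ℂ).re := by
        have hh : θ (star c' * u) = star (θ (star u * c')) := by
          rw [← hθstar]
          congr 1
          rw [StarMul.star_mul, star_star]
        rw [hh, ContinuousLinearMap.star_eq_adjoint, ContinuousLinearMap.adjoint_inner_right,
          ← inner_conj_symm]
        exact Complex.conj_re _
      have e2 : (⟪π u ξ, θ c' ξ⟫_ℂ).re = (⟪ξ, ((π (star u)) ∘L θ c') ξ⟫_ℂ).re := by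
        have ha : ((π (star u)) ∘L θ c') ξ = (ContinuousLinearMap.adjoint (π u)) (θ c' ξ) := by
          rw [hπadj]
          rfl
        rw [ha, ContinuousLinearMap.adjoint_inner_right]
      rw [hAq, e1, e2] at hA0
      simp only [ContinuousLinearMap.sub_apply, inner_sub_right, Complex.sub_re]
      linarith
    intro c
    set X := θ (star u * c) - (π (star u)) ∘L θ c with hX
    have hzero : ∀ ξ : H, ⟪X ξ, ξ⟫_ℂ = 0 := by
      intro ξ
      have hr : (⟪ξ, X ξ⟫_ℂ).re = 0 := main c ξ
      have hi : (⟪ξ, X ξ⟫_ℂ).im = 0 := by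
        have h2' := main (Complex.I • c) ξ
        have hXs : θ (star u * (Complex.I • c)) = Complex.I • θ (star u * c) := by
          rw [mul_smul_comm, hθsmul]
        have hZs : (π (star u)) ∘L (θ (Complex.I • c))
            = Complex.I • ((π (star u)) ∘L θ c) := by
          rw [hθsmul, ContinuousLinearMap.comp_smul]
        rw [hXs, hZs, ← smul_sub, ← hX] at h2'
        rw [ContinuousLinearMap.smul_apply, inner_smul_right] at h2'
        simpa [Complex.mul_re, Complex.I_re, Complex.I_im] using h2'
      have hc : ⟪ξ, X ξ⟫_ℂ = 0 := by
        apply Complex.ext <;> simpa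
      rw [← inner_conj_symm, hc, map_zero]
    have hX0 : X = 0 := by
      have hlin := (inner_map_self_eq_zero (X : H →ₗ[ℂ] H)).mp (fun ξ => hzero ξ)
      apply ContinuousLinearMap.coe_injective
      rw [hlin]
      rfl
    have := sub_eq_zero.mp hX0
    exact this
    -- derived multiplication rules
  have hMLu : ∀ u : C, u ∈ S → u ∈ unitary C → ∀ c : C, θ (u * c) = (π u) ∘L θ c := by
    intro u hS hU c
    have h := hML (star u) (hstar u hS) (Unitary.star_mem hU) c
    rwa [star_star] at h
  have hθadjθ : ∀ c : C, ContinuousLinearMap.adjoint (θ (star c)) = θ c := by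
    intro c
    rw [← ContinuousLinearMap.star_eq_adjoint, ← hθstar, star_star]
  have hMR : ∀ u : C, u ∈ S → u ∈ unitary C → ∀ c : C, θ (c * u) = θ c ∘L π u := by
    intro u hS hU c
    have h := hML u hS hU (star c)
    have h2 : θ (c * u) = star (θ (star u * star c)) := by
      rw [← hθstar]
      congr 1
      rw [StarMul.star_mul, star_star, star_star]
    rw [h2, h, ContinuousLinearMap.star_eq_adjoint, ContinuousLinearMap.adjoint_comp,
      hπadj, star_star, hθadjθ]
  -- θ = π on the star subalgebra generated by unitaries of S
  have hind : ∀ c ∈ (StarAlgebra.adjoin ℂ {u : C | u ∈ S ∧ u ∈ unitary C} : StarSubalgebra ℂ C),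
      θ c = π c ∧ (∀ d, θ (c * d) = π c ∘L θ d) ∧ (∀ d, θ (d * c) = θ d ∘L π c) := by
    intro c hc
    induction hc using StarAlgebra.adjoin_induction with
    | mem x hx => exact ⟨hθS x hx.1, fun d => hMLu x hx.1 hx.2 d, fun d => hMR x hx.1 hx.2 d⟩
    | algebraMap r =>
      have hπr : π (algebraMap ℂ C r) = r • (1 : H →L[ℂ] H) := by
        rw [AlgHomClass.commutes, Algebra.algebraMap_eq_smul_one]
      refine ⟨?_, fun d => ?_, fun d => ?_⟩
      · rw [Algebra.algebraMap_eq_smul_one, hθsmul, hθ1, _root_.map_smul, _root_.map_one]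
      · rw [← Algebra.smul_def, hθsmul, hπr, ContinuousLinearMap.smul_comp,
          ContinuousLinearMap.one_def, ContinuousLinearMap.id_comp]
      · rw [← Algebra.commutes, ← Algebra.smul_def, hθsmul, hπr,
          ContinuousLinearMap.comp_smul, ContinuousLinearMap.one_def,
          ContinuousLinearMap.comp_id]
    | add x y hx hy ihx ihy =>
      refine ⟨?_, fun d => ?_, fun d => ?_⟩
      · rw [hθadd, ihx.1, ihy.1, map_add]
      · rw [add_mul, hθadd, ihx.2.1, ihy.2.1, map_add, ContinuousLinearMap.add_comp]
      · rw [mul_add, hθadd, ihx.2.2, ihy.2.2, map_add, ContinuousLinearMap.comp_add]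
    | mul x y hx hy ihx ihy =>
      refine ⟨?_, fun d => ?_, fun d => ?_⟩
      · rw [ihx.2.1 y, ihy.1, _root_.map_mul]
        rfl
      · rw [mul_assoc, ihx.2.1, ihy.2.1, _root_.map_mul, ← ContinuousLinearMap.comp_assoc]
        rfl
      · rw [← mul_assoc, ihy.2.2, ihx.2.2, _root_.map_mul, ContinuousLinearMap.comp_assoc]
        rfl
    | star x hx ihx =>
      refine ⟨?_, fun d => ?_, fun d => ?_⟩
      · rw [hθstar, ihx.1, ← map_star]
      · have h := ihx.2.2 (star d)
        have h2 : θ (star x * d) = star (θ (star d * x)) := by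
          rw [← hθstar]
          congr 1
          rw [StarMul.star_mul, star_star]
        rw [h2, h, ContinuousLinearMap.star_eq_adjoint, ContinuousLinearMap.adjoint_comp,
          hπadj, hθadjθ]
      · have h := ihx.2.1 (star d)
        have h2 : θ (d * star x) = star (θ (x * star d)) := by
          rw [← hθstar]
          congr 1
          rw [StarMul.star_mul, star_star]
        rw [h2, h, ContinuousLinearMap.star_eq_adjoint, ContinuousLinearMap.adjoint_comp,
          hπadj, hθadjθ]
  -- boundedness of ψ
  have hψsab : ∀ a : C, IsSelfAdjoint a → ∀ ξ : K, (⟪ξ, ψ a ξ⟫_ℂ).re ≤ ‖a‖ * ‖ξ‖ ^ 2 := by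
    intro a ha ξ
    obtain ⟨b, hb⟩ := cstar_exists_sqrt a ha
    have hpos : 0 ≤ (⟪ξ, ψ (star b * b) ξ⟫_ℂ).re := by
      have h := schwarz_aux ψ hψcp b 0 ξ 0
      simpa using h
    rw [← hb] at hpos
    have he : ψ ((‖a‖ : ℂ) • (1 : C) - a) = (‖a‖ : ℂ) • (1 : K →L[ℂ] K) - ψ a := by
      rw [map_sub, _root_.map_smul, hψ1]
    rw [he] at hpos
    simp only [ContinuousLinearMap.sub_apply, ContinuousLinearMap.smul_apply,
      ContinuousLinearMap.one_apply, inner_sub_right, inner_smul_right, Complex.sub_re,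
      Complex.re_ofReal_mul] at hpos
    rw [cre ξ] at hpos
    linarith
  have hψsa_norm : ∀ a : C, IsSelfAdjoint a → ‖ψ a‖ ≤ ‖a‖ := by
    intro a ha
    refine sa_opnorm_le (ψ a) ?_ (norm_nonneg a) ?_
    · show star (ψ a) = ψ a
      rw [← hψstar, ha.star_eq]
    · intro ξ
      rw [abs_le]
      refine ⟨?_, hψsab a ha ξ⟩
      have h2 := hψsab (-a) ha.neg ξ
      rw [map_neg, norm_neg] at h2
      simp only [ContinuousLinearMap.neg_apply, inner_neg_right, Complex.neg_re] at h2
      linarith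
  have hψbound : ∀ c : C, ‖ψ c‖ ≤ 2 * ‖c‖ := by
    intro c
    set a : C := (2 : ℂ)⁻¹ • (c + star c) with ha_def
    set b : C := (-Complex.I / 2) • (c - star c) with hb_def
    have hsa_a : IsSelfAdjoint a := by
      show star a = a
      rw [ha_def, star_smul, star_add, star_star]
      simp [add_comm]
    have hsa_b : IsSelfAdjoint b := by
      show star b = b
      rw [hb_def, star_smul, star_sub, star_star]
      simp only [star_div₀, star_neg, Complex.star_def, Complex.conj_I, map_ofNat]
      rw [smul_sub, smul_sub]
      module
    have hdecomp : c = a + Complex.I • b := by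
      rw [ha_def, hb_def, smul_smul]
      have hI : Complex.I * (-Complex.I / 2) = (2 : ℂ)⁻¹ := by
        linear_combination (-1 / 2 : ℂ) * Complex.I_mul_I
      rw [hI]
      rw [smul_add, smul_sub]
      module
    have hna : ‖a‖ ≤ ‖c‖ := by
      rw [ha_def, norm_smul]
      have : ‖(2 : ℂ)⁻¹‖ = 2⁻¹ := by norm_num
      rw [this]
      have := norm_add_le c (star c)
      rw [norm_star] at this
      linarith
    have hnb : ‖b‖ ≤ ‖c‖ := by
      rw [hb_def, norm_smul]
      have h0 : ‖-Complex.I / 2‖ = 2⁻¹ := by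
        rw [norm_div, norm_neg, Complex.norm_I]
        norm_num
      rw [h0]
      have := norm_sub_le c (star c)
      rw [norm_star] at this
      linarith
    calc ‖ψ c‖ = ‖ψ a + Complex.I • ψ b‖ := by
          rw [← _root_.map_smul, ← map_add, ← hdecomp]
      _ ≤ ‖ψ a‖ + ‖Complex.I • ψ b‖ := norm_add_le _ _
      _ = ‖ψ a‖ + ‖ψ b‖ := by rw [norm_smul, Complex.norm_I, one_mul]
      _ ≤ ‖a‖ + ‖b‖ := add_le_add (hψsa_norm a hsa_a) (hψsa_norm b hsa_b)
      _ ≤ 2 * ‖c‖ := by linarith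
  have hψcont : Continuous fun c : C => ψ c := AddMonoidHomClass.continuous_of_bound ψ 2 hψbound
  have hπcont : Continuous fun c : C => π c := by
    refine AddMonoidHomClass.continuous_of_bound π 1 fun c => ?_
    rw [one_mul]
    exact NonUnitalStarAlgHom.norm_apply_le π c
  -- θ = π everywhere by density
  have hθall : ∀ c : C, θ c = π c := by
    have hθcont : Continuous θ := by
      have h1 : Continuous fun c : C => (ψ c).comp V := hψcont.clm_comp continuous_const
      exact continuous_const.clm_comp h1
    have hcl : IsClosed {c : C | θ c = π c} := isClosed_eq hθcont hπcont
    have hsub : ((StarAlgebra.adjoin ℂ {u : C | u ∈ S ∧ u ∈ unitary C} :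
        StarSubalgebra ℂ C) : Set C) ⊆ {c : C | θ c = π c} := fun x hx => (hind x hx).1
    intro c
    have := closure_minimal hsub hcl
    rw [hgen] at this
    exact this (Set.mem_univ c)
  -- ψ c ∘ V = V ∘ π c
  have hVψ : ∀ c : C, (ψ c) ∘L V = V ∘L (π c) := by
    intro c
    ext ξ
    have hbound := hSGψ c (V ξ)
    have hππ : ∀ η : H, ⟪η, π (star c * c) η⟫_ℂ = ⟪π c η, π c η⟫_ℂ := by
      intro η
      have h : π (star c * c) η = (ContinuousLinearMap.adjoint (π c)) (π c η) := by
        rw [hπadj, ← ContinuousLinearMap.comp_apply, ← ContinuousLinearMap.mul_def,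
          ← _root_.map_mul]
      rw [h, ContinuousLinearMap.adjoint_inner_right]
    have h1 : (⟪V ξ, ψ (star c * c) (V ξ)⟫_ℂ).re = ‖π c ξ‖ ^ 2 := by
      rw [← hθinner (star c * c) ξ ξ, hθall (star c * c), hππ ξ]
      exact cre _
    have h2 : (⟪ψ c (V ξ), V (π c ξ)⟫_ℂ).re = ‖π c ξ‖ ^ 2 := by
      have e0 : ⟪V (π c ξ), ψ c (V ξ)⟫_ℂ = ⟪π c ξ, θ c ξ⟫_ℂ := by
        rw [hVapp]
        rfl
      have e1 : ⟪ψ c (V ξ), V (π c ξ)⟫_ℂ = ⟪π c ξ, π c ξ⟫_ℂ := by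
        rw [← inner_conj_symm, e0, hθall c]
        exact inner_conj_symm _ _
      rw [e1]
      exact cre _
    have h3 : ‖V (π c ξ)‖ ^ 2 = ‖π c ξ‖ ^ 2 := by
      rw [← cre, ← cre (π c ξ), hVisom]
    have hdiff : ‖ψ c (V ξ) - V (π c ξ)‖ ^ 2 ≤ 0 := by
      rw [← cre, inner_sub_sub_self]
      have hsym3 : (⟪V (π c ξ), ψ c (V ξ)⟫_ℂ).re = (⟪ψ c (V ξ), V (π c ξ)⟫_ℂ).re := by
        rw [← inner_conj_symm]
        exact Complex.conj_re _
      simp only [Complex.add_re, Complex.sub_re]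
      have c1 : (⟪ψ c (V ξ), ψ c (V ξ)⟫_ℂ).re = ‖ψ c (V ξ)‖ ^ 2 := cre _
      have c2 : (⟪V (π c ξ), V (π c ξ)⟫_ℂ).re = ‖π c ξ‖ ^ 2 := by
        rw [cre]
        exact h3
      linarith [hbound, h1, h2, hsym3]
    have h0 : ψ c (V ξ) - V (π c ξ) = 0 := by
      have h9 : ‖ψ c (V ξ) - V (π c ξ)‖ ^ 2 = 0 :=
        le_antisymm hdiff (sq_nonneg _)
      have hn : ‖ψ c (V ξ) - V (π c ξ)‖ = 0 := sq_eq_zero_iff.mp h9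
      exact norm_eq_zero.mp hn
    have h10 := sub_eq_zero.mp h0
    simpa using h10
  have hVdψ : ∀ c : C, (ContinuousLinearMap.adjoint V) ∘L ψ c
      = π c ∘L (ContinuousLinearMap.adjoint V) := by
    intro c
    have h := congrArg ContinuousLinearMap.adjoint (hVψ (star c))
    rw [ContinuousLinearMap.adjoint_comp, ContinuousLinearMap.adjoint_comp] at h
    have e : ContinuousLinearMap.adjoint (ψ (star c)) = ψ c := by
      rw [← ContinuousLinearMap.star_eq_adjoint, ← hψstar, star_star]
    rw [e, hπadj, star_star] at h
    exact h
  intro c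
  refine ⟨hθall c, ?_⟩
  calc (ψ c) ∘L (V ∘L (ContinuousLinearMap.adjoint V))
      = ((ψ c) ∘L V) ∘L (ContinuousLinearMap.adjoint V) := by
        rw [ContinuousLinearMap.comp_assoc]
    _ = (V ∘L (π c)) ∘L (ContinuousLinearMap.adjoint V) := by rw [hVψ c]
    _ = V ∘L ((π c) ∘L (ContinuousLinearMap.adjoint V)) := by rw [ContinuousLinearMap.comp_assoc]
    _ = V ∘L ((ContinuousLinearMap.adjoint V) ∘L ψ c) := by rw [hVdψ c]
    _ = (V ∘L (ContinuousLinearMap.adjoint V)) ∘L ψ c := by rw [ContinuousLinearMap.comp_assoc]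
end

section
/- Let (S, G, g, α) and (T, G, g, β) be operator system dynamical systems over a discrete group G with symmetric generating set g containing e, and let φ : S → T be a G-equivariant ucp map (β_h ∘ φ = φ ∘ α_h for all h ∈ G). Then the map a λ_h ↦ φ(a) λ_h extends to a ucp map from S ⋊_{α,λ} g to T ⋊_{β,λ} g; moreover if φ is a unital complete order embedding then so is the induced map. -/
set_option linter.unusedSectionVars false
set_option linter.unusedTactic false
set_option maxHeartbeats 1000000


open Matrix

noncomputable section

def IsUCPOn {A B : Type*} [Ring A] [StarRing A] [Module ℂ A]
    [Ring B] [StarRing B] [Module ℂ B] (S : Set A) (φ : A →ₗ[ℂ] B) : Prop :=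
  φ 1 = 1 ∧
  ∀ (n : ℕ) (M : Matrix (Fin n) (Fin n) A),
    (∀ i j, M i j ∈ S) → MatPos M → MatPos (M.map ⇑φ)

namespace CPAux

variable {R : Type*} [Ring R] [StarRing R]

def flat {ι κ : Type*} (M : Matrix ι ι (Matrix κ κ R)) : Matrix (ι × κ) (ι × κ) R :=
  Matrix.of fun p q => M p.1 q.1 p.2 q.2

def unflat {ι κ : Type*} (B : Matrix (ι × κ) (ι × κ) R) : Matrix ι ι (Matrix κ κ R) :=
  Matrix.of fun i j => Matrix.of fun k l => B (i, k) (j, l)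

lemma flat_unflat {ι κ : Type*} (B : Matrix (ι × κ) (ι × κ) R) : flat (unflat B) = B := by
  ext ⟨i, k⟩ ⟨j, l⟩; rfl

lemma flat_inj {ι κ : Type*} {M N : Matrix ι ι (Matrix κ κ R)} (h : flat M = flat N) :
    M = N := by
  ext i j k l
  exact congrFun (congrFun h (i, k)) (j, l)

lemma flat_mul {ι κ : Type*} [Fintype ι] [Fintype κ]
    (M N : Matrix ι ι (Matrix κ κ R)) : flat (M * N) = flat M * flat N := by
  ext ⟨i, k⟩ ⟨j, l⟩
  simp [flat, Matrix.mul_apply, Matrix.sum_apply, Fintype.sum_prod_type]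

lemma flat_star {ι κ : Type*} [Fintype ι] [Fintype κ]
    (M : Matrix ι ι (Matrix κ κ R)) : flat (star M) = star (flat M) := by
  ext ⟨i, k⟩ ⟨j, l⟩
  simp [flat, Matrix.star_apply]

lemma matPos_flat_iff {ι κ : Type*} [Fintype ι] [Fintype κ] [DecidableEq κ]
    (M : Matrix ι ι (Matrix κ κ R)) : MatPos (flat M) ↔ MatPos M := by
  constructor
  · rintro ⟨B, hB⟩
    refine ⟨unflat B, flat_inj ?_⟩
    rw [flat_mul, flat_star, flat_unflat, hB]
  · rintro ⟨B, hB⟩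
    exact ⟨flat B, by rw [hB, flat_mul, flat_star]⟩

lemma matPos_submatrix {ι κ : Type*} [Fintype ι] [Fintype κ]
    (e : κ ≃ ι) {M : Matrix ι ι R} (h : MatPos M) : MatPos (M.submatrix e e) := by
  obtain ⟨B, hB⟩ := h
  refine ⟨B.submatrix e e, ?_⟩
  have : star (B.submatrix e e) = (star B).submatrix e e := by
    simp [Matrix.star_eq_conjTranspose, Matrix.conjTranspose_submatrix]
  rw [this, Matrix.submatrix_mul_equiv, hB]

lemma matPos_submatrix_iff {ι κ : Type*} [Fintype ι] [Fintype κ]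
    (e : κ ≃ ι) (M : Matrix ι ι R) : MatPos (M.submatrix e e) ↔ MatPos M := by
  constructor
  · intro h
    have := matPos_submatrix e.symm h
    simpa [Matrix.submatrix_submatrix] using this
  · exact matPos_submatrix e

variable {D : Type*} [Ring D] [StarRing D]

lemma flat_block_map {ι κ : Type*} (φ : R → D) (M : Matrix ι ι (Matrix κ κ R)) :
    flat (Matrix.of fun g h => (M g h).map φ) = (flat M).map φ := by
  ext ⟨i, k⟩ ⟨j, l⟩; rfl

/-- forward transfer of block positivity along an entrywise map positive on `S`. -/
lemma matPos_block_map (φ : R → D) (S : Set R) {n : ℕ} {ι : Type*} [Fintype ι]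
    (hf : ∀ (m : ℕ) (N : Matrix (Fin m) (Fin m) R),
      (∀ i j, N i j ∈ S) → MatPos N → MatPos (N.map φ))
    (M : Matrix ι ι (Matrix (Fin n) (Fin n) R)) (hMS : ∀ g h i j, M g h i j ∈ S)
    (hM : MatPos M) : MatPos (Matrix.of fun g h => (M g h).map φ) := by
  let e := Fintype.equivFin (ι × Fin n)
  have h1 : MatPos ((flat M).submatrix e.symm e.symm) :=
    matPos_submatrix e.symm ((matPos_flat_iff M).2 hM)
  have h2 : MatPos ((flat (Matrix.of fun g h => (M g h).map φ)).submatrix ⇑e.symm ⇑e.symm) :=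
    hf _ _ (fun i j => hMS _ _ _ _) h1
  exact (matPos_flat_iff _).1 ((matPos_submatrix_iff e.symm _).1 h2)

/-- backward transfer of block positivity. -/
lemma matPos_block_of_map (φ : R → D) (S : Set R) {n : ℕ} {ι : Type*} [Fintype ι]
    (hb : ∀ (m : ℕ) (N : Matrix (Fin m) (Fin m) R),
      (∀ i j, N i j ∈ S) → MatPos (N.map φ) → MatPos N)
    (M : Matrix ι ι (Matrix (Fin n) (Fin n) R)) (hMS : ∀ g h i j, M g h i j ∈ S)
    (hM : MatPos (Matrix.of fun g h => (M g h).map φ)) : MatPos M := by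
  let e := Fintype.equivFin (ι × Fin n)
  have h1 : MatPos (((flat M).submatrix ⇑e.symm ⇑e.symm).map φ) :=
    matPos_submatrix e.symm ((matPos_flat_iff _).2 hM)
  have h2 := hb _ _ (fun i j => hMS _ _ _ _) h1
  exact (matPos_flat_iff M).1 ((matPos_submatrix_iff e.symm _).1 h2)

end CPAux

/-- Positivity of a matrix `X` of finitely supported coefficient functions, viewed as a
matrix over the reduced crossed product `C ⋊_{α,λ} G` via the standard criterion:
for every finite `F ⊆ G`, the matrix `[α_{g⁻¹}(X_{gh⁻¹})]_{g,h ∈ F}` is positive. -/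
def RedCPPos {C : Type*} [Ring C] [StarRing C] [Module ℂ C]
    {G : Type*} [Group G] [DecidableEq G] (α : G → (C ≃⋆ₐ[ℂ] C))
    {n : ℕ} (X : Matrix (Fin n) (Fin n) (G →₀ C)) : Prop :=
  ∀ F : Finset G,
    MatPos (Matrix.of (fun g h : ↥F =>
      Matrix.of (fun i j : Fin n => α (↑g)⁻¹ (X i j ((g : G) * (↑h)⁻¹)))))

/-- **`G`-equivariant ucp maps induce ucp maps on reduced crossed products**; moreover a
`G`-equivariant complete order embedding induces a complete order embedding. -/
theorem equivariant_ucp_induces_ucp_on_reduced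
    {C : Type*} [NormedRing C] [StarRing C] [CStarRing C] [NormedAlgebra ℂ C]
    [StarModule ℂ C] [CompleteSpace C]
    {D : Type*} [NormedRing D] [StarRing D] [CStarRing D] [NormedAlgebra ℂ D]
    [StarModule ℂ D] [CompleteSpace D]
    {G : Type*} [Group G] [DecidableEq G]
    (gset : Set G) (hge : (1 : G) ∈ gset) (hgsymm : ∀ h ∈ gset, h⁻¹ ∈ gset)
    (hggen : Subgroup.closure gset = ⊤)
    (αC : G → (C ≃⋆ₐ[ℂ] C)) (αD : G → (D ≃⋆ₐ[ℂ] D))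
    (hαCmul : ∀ g h : G, ∀ c : C, αC (g * h) c = αC g (αC h c))
    (hαDmul : ∀ g h : G, ∀ d : D, αD (g * h) d = αD g (αD h d))
    (S : Submodule ℂ C) (hS1 : (1 : C) ∈ S) (hSstar : ∀ x ∈ S, star x ∈ S)
    (hSinv : ∀ g : G, ∀ s ∈ S, αC g s ∈ S)
    (T : Submodule ℂ D) (hT1 : (1 : D) ∈ T) (hTstar : ∀ x ∈ T, star x ∈ T)
    (hTinv : ∀ g : G, ∀ t ∈ T, αD g t ∈ T)
    (φ : C →ₗ[ℂ] D) (hφucp : IsUCPOn (S : Set C) φ)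
    (hφST : ∀ s ∈ S, φ s ∈ T)
    (hequiv : ∀ g : G, ∀ s ∈ S, φ (αC g s) = αD g (φ s)) :
    -- the induced map `a λ_h ↦ φ(a) λ_h` on reduced crossed products is ucp:
    (∀ (n : ℕ) (X : Matrix (Fin n) (Fin n) (G →₀ C)),
      (∀ i j h, X i j h ∈ S) → (∀ i j, ((X i j).support : Set G) ⊆ gset) →
      RedCPPos αC X →
      RedCPPos αD (X.map (Finsupp.mapRange ⇑φ (map_zero φ)))) ∧
    -- if `φ` is a complete order embedding, so is the induced map:
    ((∀ (n : ℕ) (M : Matrix (Fin n) (Fin n) C), (∀ i j, M i j ∈ S) →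
        (MatPos M ↔ MatPos (M.map ⇑φ))) →
      ∀ (n : ℕ) (X : Matrix (Fin n) (Fin n) (G →₀ C)),
        (∀ i j h, X i j h ∈ S) → (∀ i j, ((X i j).support : Set G) ⊆ gset) →
        (RedCPPos αC X ↔
          RedCPPos αD (X.map (Finsupp.mapRange ⇑φ (map_zero φ))))) := by
  classical
  -- the key pointwise identity relating the two positivity criteria
  have hEq : ∀ (n : ℕ) (X : Matrix (Fin n) (Fin n) (G →₀ C)),
      (∀ i j h, X i j h ∈ S) → ∀ F : Finset G,
      (Matrix.of (fun g h : ↥F => Matrix.of (fun i j : Fin n =>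
          αD (↑g)⁻¹ ((X.map (Finsupp.mapRange ⇑φ (map_zero φ))) i j ((g : G) * (↑h)⁻¹))))) =
      (Matrix.of fun g h : ↥F =>
        (Matrix.of (fun i j : Fin n => αC (↑g)⁻¹ (X i j ((g : G) * (↑h)⁻¹)))).map ⇑φ) := by
    intro n X hXS F
    ext g h i j
    simp only [Matrix.of_apply, Matrix.map_apply, Finsupp.mapRange_apply]
    exact (hequiv (↑g : G)⁻¹ _ (hXS i j _)).symm
  have fwd : ∀ (hf : ∀ (m : ℕ) (N : Matrix (Fin m) (Fin m) C),
        (∀ i j, N i j ∈ S) → MatPos N → MatPos (N.map ⇑φ))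
      (n : ℕ) (X : Matrix (Fin n) (Fin n) (G →₀ C)),
      (∀ i j h, X i j h ∈ S) → RedCPPos αC X →
      RedCPPos αD (X.map (Finsupp.mapRange ⇑φ (map_zero φ))) := by
    intro hf n X hXS hpos F
    rw [hEq n X hXS F]
    exact CPAux.matPos_block_map ⇑φ (S : Set C) hf _
      (fun g h i j => hSinv _ _ (hXS i j _)) (hpos F)
  refine ⟨fun n X hXS _ hpos => fwd hφucp.2 n X hXS hpos, ?_⟩
  intro hcoe n X hXS hsupp
  constructor
  · exact fun hpos => fwd (fun m N hN => (hcoe m N hN).mp) n X hXS hpos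
  · intro hpos F
    have h1 := hpos F
    rw [hEq n X hXS F] at h1
    exact CPAux.matPos_block_of_map ⇑φ (S : Set C)
      (fun m N hN => (hcoe m N hN).mpr) _
      (fun g h i j => hSinv _ _ (hXS i j _)) h1

end
end
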